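/- Let m, t, d be natural numbers and X•, Y• bounded complexes of Λ-modules with X^i = 0 for i < m, Y^j = 0 for j > t, and Ext^l_F(X^i, Y^j) = 0 for all i, j and all l ≥ d. Then Hom_{D_F^b(Λ)}(X•, Y•[l]) = 0 for all l ≥ d + t − m. -/

import Mathlib

open CategoryTheory CategoryTheory.Limits CategoryTheory.Category

universe w v u v' u'

namespace RelDer

variable {𝒜 : Type u} [Category.{v} 𝒜] [Abelian 𝒜]

/-- `g` is an `F`-epimorphism: it fits into an `F`-exact short exact sequence. -/
def FEpi (F : ShortComplex 𝒜 → Prop) {B C : 𝒜} (g : B ⟶ C) : Prop :=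
  ∃ (K : 𝒜) (k : K ⟶ B) (w : k ≫ g = 0), F (ShortComplex.mk k g w)

/-- `f` is an `F`-monomorphism. -/
def FMono (F : ShortComplex 𝒜 → Prop) {A B : 𝒜} (f : A ⟶ B) : Prop :=
  ∃ (C : 𝒜) (g : B ⟶ C) (w : f ≫ g = 0), F (ShortComplex.mk f g w)

/-- `P` is `F`-projective: `Hom(P,-)` sends `F`-exact sequences to exact sequences. -/
def FProjective (F : ShortComplex 𝒜 → Prop) (P : 𝒜) : Prop :=
  ∀ (S : ShortComplex 𝒜), F S → ∀ (p : P ⟶ S.X₃), ∃ q : P ⟶ S.X₂, q ≫ S.g = p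

/-- `I` is `F`-injective. -/
def FInjective (F : ShortComplex 𝒜 → Prop) (I : 𝒜) : Prop :=
  ∀ (S : ShortComplex 𝒜), F S → ∀ (p : S.X₁ ⟶ I), ∃ q : S.X₂ ⟶ I, S.f ≫ q = p

/-- `F` has enough projectives. -/
def HasEnoughFProjectives (F : ShortComplex 𝒜 → Prop) : Prop :=
  ∀ M : 𝒜, ∃ (P : 𝒜) (g : P ⟶ M), FProjective F P ∧ FEpi F g

/-- `F` has enough injectives. -/
def HasEnoughFInjectives (F : ShortComplex 𝒜 → Prop) : Prop :=
  ∀ M : 𝒜, ∃ (I : 𝒜) (f : M ⟶ I), FInjective F I ∧ FMono F f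

lemma image_ι_comp_d (X : CochainComplex 𝒜 ℤ) (i : ℤ) :
    image.ι (X.d (i-1) i) ≫ X.d i (i+1) = 0 := by
  rw [← cancel_epi (factorThruImage (X.d (i-1) i)), image.fac_assoc,
    HomologicalComplex.d_comp_d, comp_zero]

/-- The short complex `Im d^{i-1} → X^i → Im d^i` associated to a cochain complex. -/
noncomputable def imagesShortComplex (X : CochainComplex 𝒜 ℤ) (i : ℤ) : ShortComplex 𝒜 :=
  ShortComplex.mk (image.ι (X.d (i-1) i)) (factorThruImage (X.d i (i+1)))
    (by rw [← cancel_mono (image.ι (X.d i (i+1))), assoc, image.fac, zero_comp,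
      image_ι_comp_d])

/-- A complex is `F`-acyclic if each `0 → Im d^{i-1} → X^i → Im d^i → 0` is `F`-exact. -/
def FAcyclic (F : ShortComplex 𝒜 → Prop) (X : CochainComplex 𝒜 ℤ) : Prop :=
  ∀ i : ℤ, F (imagesShortComplex X i)

/-- A chain map is an `F`-quasi-isomorphism if its mapping cone is `F`-acyclic. -/
def FQuasiIso (F : ShortComplex 𝒜 → Prop) {X Y : CochainComplex 𝒜 ℤ} (f : X ⟶ Y) : Prop :=
  FAcyclic F (CochainComplex.mappingCone f)

def BoundedAbove (X : CochainComplex 𝒜 ℤ) : Prop :=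
  ∃ n : ℤ, ∀ i, n < i → IsZero (X.X i)

def Bounded (X : CochainComplex 𝒜 ℤ) : Prop :=
  ∃ a b : ℤ, ∀ i, (i < a ∨ b < i) → IsZero (X.X i)

/-- An equivalence of (pre)triangulated categories. -/
structure TriangleEquivalence (C : Type u) (D : Type u') [Category.{v} C] [Category.{v'} D]
    [HasShift C ℤ] [HasShift D ℤ] [Preadditive C] [Preadditive D]
    [HasZeroObject C] [HasZeroObject D]
    [∀ n : ℤ, (shiftFunctor C n).Additive] [∀ n : ℤ, (shiftFunctor D n).Additive]
    [Pretriangulated C] [Pretriangulated D] where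
  e : C ≌ D
  commShift : e.functor.CommShift ℤ
  isTriangulated : letI := commShift; e.functor.IsTriangulated

/-- Two maps are stably equal if their difference factors through an object satisfying `P`. -/
def stableHomRel (P : 𝒜 → Prop) : HomRel 𝒜 := fun {X Y} f g =>
  ∃ (Z : 𝒜) (_ : P Z) (a : X ⟶ Z) (b : Z ⟶ Y), f - g = a ≫ b

/-- The stable category of `𝒜` modulo objects satisfying `P`. -/
abbrev StableCategory (P : 𝒜 → Prop) := CategoryTheory.Quotient (stableHomRel P)

/-- The complex `Hom(P^•, Y)` of abelian groups, whose homology computes relative Ext. -/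
noncomputable def homComplex (P : CochainComplex 𝒜 ℤ) (Y : 𝒜) :
    HomologicalComplex AddCommGrpCat (ComplexShape.up ℤ).symm :=
  ((preadditiveYoneda.obj Y).mapHomologicalComplex (ComplexShape.up ℤ).symm).obj P.op

/-- The relative Ext group `Ext^i_F(X,Y)` computed from an `F`-projective resolution `P` of
`X` as the `i`-th cohomology of `Hom(P^•,Y)`. -/
noncomputable def extFGroup (P : CochainComplex 𝒜 ℤ) (Y : 𝒜) (i : ℤ) : AddCommGrpCat :=
  (homComplex P Y).homology (-i)

/-- `P`, together with the augmentation `ε`, is an `F`-projective resolution of `X`. -/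
def IsFProjResolution (F : ShortComplex 𝒜 → Prop) (X : 𝒜) (P : CochainComplex 𝒜 ℤ)
    (ε : P ⟶ (CochainComplex.singleFunctor 𝒜 0).obj X) : Prop :=
  (∀ i : ℤ, 0 < i → IsZero (P.X i)) ∧ (∀ i : ℤ, FProjective F (P.X i)) ∧ FQuasiIso F ε

/-- `X` has `F`-projective dimension at most `m`. -/
def FProjDimLe (F : ShortComplex 𝒜 → Prop) (X : 𝒜) (m : ℕ) : Prop :=
  ∃ (P : CochainComplex 𝒜 ℤ) (ε : P ⟶ (CochainComplex.singleFunctor 𝒜 0).obj X),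
    IsFProjResolution F X P ε ∧ ∀ i : ℤ, i < -(m : ℤ) → IsZero (P.X i)

/-- `I`, together with the augmentation `ε`, is an `F`-injective coresolution of `X`. -/
def IsFInjCoresolution (F : ShortComplex 𝒜 → Prop) (X : 𝒜) (I : CochainComplex 𝒜 ℤ)
    (ε : (CochainComplex.singleFunctor 𝒜 0).obj X ⟶ I) : Prop :=
  (∀ i : ℤ, i < 0 → IsZero (I.X i)) ∧ (∀ i : ℤ, FInjective F (I.X i)) ∧ FQuasiIso F ε

/-- `X` has `F`-injective dimension at most `m`. -/
def FInjDimLe (F : ShortComplex 𝒜 → Prop) (X : 𝒜) (m : ℕ) : Prop :=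
  ∃ (I : CochainComplex 𝒜 ℤ) (ε : (CochainComplex.singleFunctor 𝒜 0).obj X ⟶ I),
    IsFInjCoresolution F X I ε ∧ ∀ i : ℤ, (m : ℤ) < i → IsZero (I.X i)

/-- The `F`-projective dimension of `X`, valued in `ℕ∞`. -/
noncomputable def FProjDim (F : ShortComplex 𝒜 → Prop) (X : 𝒜) : ℕ∞ :=
  sInf {n : ℕ∞ | ∃ m : ℕ, n = m ∧ FProjDimLe F X m}

/-- The `F`-injective dimension of `X`, valued in `ℕ∞`. -/
noncomputable def FInjDim (F : ShortComplex 𝒜 → Prop) (X : 𝒜) : ℕ∞ :=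
  sInf {n : ℕ∞ | ∃ m : ℕ, n = m ∧ FInjDimLe F X m}

/-- The `F`-global dimension. -/
noncomputable def FGlobalDim (F : ShortComplex 𝒜 → Prop) : ℕ∞ :=
  ⨆ X : 𝒜, FProjDim F X

/-- The `F`-finitistic dimension. -/
noncomputable def FFinitisticDim (F : ShortComplex 𝒜 → Prop) : ℕ∞ :=
  ⨆ X : {X : 𝒜 // FProjDim F X ≠ ⊤}, FProjDim F X.1

/-- The class of all short exact sequences: the absolute (non-relative) exact structure. -/
def allExact : ShortComplex 𝒜 → Prop := fun S => S.ShortExact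

/-- `M` belongs to `add G`. -/
def InAdd (G M : 𝒜) : Prop :=
  haveI : HasFiniteBiproducts 𝒜 := Abelian.hasFiniteBiproducts
  ∃ (n : ℕ) (N : 𝒜), Nonempty ((M ⊞ N) ≅ (⨁ fun _ : Fin n => G))

namespace Triangulated

open Pretriangulated in
structure Subcategory (C : Type u') [Category.{v'} C] [HasZeroObject C] [HasShift C ℤ]
    [Preadditive C] [∀ n : ℤ, (shiftFunctor C n).Additive] [Pretriangulated C] where
  P : C → Prop
  zero' : ∃ (Z : C) (_ : IsZero Z), P Z
  shift (X : C) (n : ℤ) : P X → P (X⟦n⟧)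
  ext₂' (T : Triangle C) (_ : T ∈ distTriang C) : P T.obj₁ → P T.obj₃ →
    ObjectProperty.isoClosure P T.obj₂

open Pretriangulated in
def Subcategory.W {C : Type u'} [Category.{v'} C] [HasZeroObject C] [HasShift C ℤ]
    [Preadditive C] [∀ n : ℤ, (shiftFunctor C n).Additive] [Pretriangulated C]
    (S : Subcategory C) : MorphismProperty C :=
  fun X Y f => ∃ (Z : C) (g : Y ⟶ Z) (h : Z ⟶ X⟦(1 : ℤ)⟧)
    (_ : Triangle.mk f g h ∈ distTriang C), S.P Z

end Triangulated

/-- `T` generates the objects satisfying `Gen` as a triangulated category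
(closed under isomorphisms and retracts/direct summands). -/
def Generates {𝒯 : Type u'} [Category.{v'} 𝒯] [HasZeroObject 𝒯] [HasShift 𝒯 ℤ]
    [Preadditive 𝒯] [∀ n : ℤ, (shiftFunctor 𝒯 n).Additive] [Pretriangulated 𝒯]
    (T : 𝒯) (Gen : 𝒯 → Prop) : Prop :=
  ∀ (S : Triangulated.Subcategory 𝒯),
    (∀ X Y : 𝒯, (X ≅ Y) → S.P X → S.P Y) →
    (∀ X Y : 𝒯, (∃ (r : X ⟶ Y) (s : Y ⟶ X), s ≫ r = 𝟙 Y) → S.P X → S.P Y) →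
    S.P T → ∀ X : 𝒯, Gen X → S.P X

end RelDer

/-!
A complex `K` with `K^i = 0` for `i < a` is an extension of the single complex `K^a[-a]` by its
stupid truncation `σ_{> a} K`; the corresponding short exact sequence of complexes is degreewise
split, hence gives a distinguished triangle in the homotopy category and then in `D_F^b(Λ)`.
So, by induction on the length, any property of objects closed under extensions and satisfied by
the zero object holds for a bounded complex as soon as it holds for all of its terms viewed as
single complexes. Apply this twice: in the second variable to `Hom(X^i[-i], -[l])`, using
`Hom(X^i[-i], Y^j[-j][l]) = Ext_F^{l+i-j}(X^i, Y^j)` with `l + i - j ≥ l + m - t ≥ d`, and then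
in the first variable to `Hom(-, Y[l])`.
-/

section Shift

variable {C : Type*} [Category C] [HasShift C ℤ]

lemma subsingleton_shift_hom_iff (X Y : C) (a c : ℤ) (h : a + c = 0) :
    Subsingleton (X⟦a⟧ ⟶ Y) ↔ Subsingleton (X ⟶ Y⟦c⟧) :=
  ((shiftEquiv' C a c h).toAdjunction.homEquiv X Y).subsingleton_congr

lemma subsingleton_shift_hom_shift_iff (X Y : C) (a b c : ℤ) (h : a + c = b) :
    Subsingleton (X⟦a⟧ ⟶ Y⟦b⟧) ↔ Subsingleton (X ⟶ Y⟦c⟧) :=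
  ((Functor.FullyFaithful.ofFullyFaithful (shiftFunctor C a)).homEquiv.trans
    (Iso.homCongr (Iso.refl _) ((shiftFunctorAdd' C c a b (by omega)).symm.app Y))
    ).subsingleton_congr.symm

end Shift

namespace CategoryTheory.ObjectProperty

variable {C : Type*} [Category C] [HasZeroMorphisms C]

lemma rightOrthogonal_singleton_iff (X Y : C) :
    (singleton X).rightOrthogonal Y ↔ Subsingleton (X ⟶ Y) := by
  rw [subsingleton_iff_forall_eq 0]
  exact ⟨fun h f => h f (by simp),
    fun h _ f hX => by obtain rfl := (singleton_iff _ _).1 hX; exact h f⟩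

lemma leftOrthogonal_singleton_iff (X Y : C) :
    (singleton Y).leftOrthogonal X ↔ Subsingleton (X ⟶ Y) := by
  rw [subsingleton_iff_forall_eq 0]
  exact ⟨fun h f => h f (by simp),
    fun h _ f hY => by obtain rfl := (singleton_iff _ _).1 hY; exact h f⟩

end CategoryTheory.ObjectProperty

lemma HomotopyCategory.trianglehOfDegreewiseSplit_distinguished {C : Type*} [Category C]
    [Preadditive C] [HasZeroObject C] [HasBinaryBiproducts C]
    (S : ShortComplex (CochainComplex C ℤ))
    (σ : ∀ n, (S.map (HomologicalComplex.eval C _ n)).Splitting) :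
    CochainComplex.trianglehOfDegreewiseSplit S σ ∈ distTriang _ :=
  (distinguished_iff_iso_trianglehOfDegreewiseSplit _).2 ⟨S, σ, ⟨Iso.refl _⟩⟩

namespace CochainComplex

variable {C : Type*} [Category C] [Abelian C] (K : CochainComplex C ℤ) (a : ℤ)
  (hK : ∀ i < a, IsZero (K.X i))

noncomputable def πSingle : K ⟶ (singleFunctor C a).obj (K.X a) :=
  HomologicalComplex.mkHomToSingle (𝟙 _) (fun i hi =>
    (hK i (by simp only [ComplexShape.up_Rel] at hi; omega)).eq_of_src _ _)

instance isIso_πSingle_f_self : IsIso ((K.πSingle a hK).f a) := by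
  rw [πSingle, HomologicalComplex.mkHomToSingle_f, id_comp]
  exact Iso.isIso_inv _

instance : Epi (K.πSingle a hK) := by
  refine HomologicalComplex.epi_of_epi_f _ (fun i => ?_)
  by_cases hi : i = a
  · subst hi
    infer_instance
  · exact (HomologicalComplex.isZero_single_obj_X _ _ _ _ hi).epi _

/-- `kernel (K.πSingle a hK)` is the stupid truncation `σ_{> a} K`. -/
noncomputable def πSingleShortComplex : ShortComplex (CochainComplex C ℤ) :=
  ShortComplex.mk _ _ (kernel.condition (K.πSingle a hK))

lemma πSingleShortComplex_shortExact : (K.πSingleShortComplex a hK).ShortExact :=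
  .mk' (ShortComplex.exact_of_f_is_kernel _ (kernelIsKernel _))
    (inferInstanceAs (Mono (kernel.ι (K.πSingle a hK))))
    (inferInstanceAs (Epi (K.πSingle a hK)))

lemma πSingleShortComplex_eval_shortExact (p : ℤ) :
    ((K.πSingleShortComplex a hK).map (HomologicalComplex.eval C _ p)).ShortExact :=
  (HomologicalComplex.shortExact_iff_degreewise_shortExact _).1
    (K.πSingleShortComplex_shortExact a hK) p

lemma isIso_kernel_ι_πSingle_f (p : ℤ) (hp : p ≠ a) :
    IsIso ((kernel.ι (K.πSingle a hK)).f p) :=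
  (K.πSingleShortComplex_eval_shortExact a hK p).isIso_f_iff.2
    (HomologicalComplex.isZero_single_obj_X (ComplexShape.up ℤ) _ _ _ hp)

lemma isZero_kernel_πSingle_X_self : IsZero ((kernel (K.πSingle a hK)).X a) :=
  (K.πSingleShortComplex_eval_shortExact a hK a).isIso_g_iff.1 (K.isIso_πSingle_f_self a hK)

lemma isZero_kernel_πSingle_X (p : ℤ) (hp : IsZero (K.X p)) :
    IsZero ((kernel (K.πSingle a hK)).X p) :=
  have := (K.πSingleShortComplex_eval_shortExact a hK p).mono_f
  hp.of_mono ((kernel.ι (K.πSingle a hK)).f p)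

lemma nonempty_πSingleShortComplex_eval_splitting (p : ℤ) :
    Nonempty ((K.πSingleShortComplex a hK).map (HomologicalComplex.eval C _ p)).Splitting := by
  by_cases hp : p = a
  · subst hp
    exact ⟨.ofIsZeroOfIsIso _ (K.isZero_kernel_πSingle_X_self p hK)
      (K.isIso_πSingle_f_self p hK)⟩
  · exact ⟨.ofIsIsoOfIsZero _ (K.isIso_kernel_ι_πSingle_f a hK p hp)
      (HomologicalComplex.isZero_single_obj_X (ComplexShape.up ℤ) _ _ _ hp)⟩

end CochainComplex

section Devissage

variable {C : Type*} [Category C] [Abelian C]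
  {D : Type*} [Category D] [HasZeroObject D] [HasShift D ℤ] [Preadditive D]
  [∀ n : ℤ, (shiftFunctor D n).Additive] [Pretriangulated D]
  (L : HomotopyCategory C (ComplexShape.up ℤ) ⥤ D) [L.CommShift ℤ] [L.IsTriangulated]

lemma prop_map_quotient_obj_of_isZero_outside (P : ObjectProperty D)
    [P.IsTriangulatedClosed₂] [P.IsClosedUnderIsomorphisms] [P.ContainsZero] (n : ℕ) :
    ∀ (K : CochainComplex C ℤ) (a : ℤ),
      (∀ i < a, IsZero (K.X i)) → (∀ i, a + n ≤ i → IsZero (K.X i)) →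
      (∀ i, P (L.obj ((HomotopyCategory.singleFunctor C i).obj (K.X i)))) →
      P (L.obj ((HomotopyCategory.quotient C _).obj K)) := by
  induction n with
  | zero =>
    intro K a hlow hhigh _
    have hK : IsZero K := by
      rw [IsZero.iff_id_eq_zero]
      ext i
      exact (if hi : i < a then hlow i hi else hhigh i (by omega)).eq_of_src _ _
    exact P.prop_of_isZero (L.map_isZero (Functor.map_isZero _ hK))
  | succ n ih =>
    intro K a hlow hhigh hsingle
    have hker : P (L.obj ((HomotopyCategory.quotient C _).obj (kernel (K.πSingle a hlow)))) := by
      refine ih _ (a + 1) (fun i hi => ?_)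
        (fun i hi => K.isZero_kernel_πSingle_X a hlow i (hhigh i (by omega))) (fun i => ?_)
      · by_cases hia : i < a
        · exact K.isZero_kernel_πSingle_X a hlow i (hlow i hia)
        · obtain rfl : i = a := by omega
          exact K.isZero_kernel_πSingle_X_self i hlow
      · by_cases hia : i = a
        · subst hia
          exact P.prop_of_isZero (L.map_isZero (Functor.map_isZero _
            (K.isZero_kernel_πSingle_X_self i hlow)))
        · have := K.isIso_kernel_ι_πSingle_f a hlow i hia
          exact P.prop_of_iso (L.mapIso ((HomotopyCategory.singleFunctor C i).mapIso
            (asIso ((kernel.ι (K.πSingle a hlow)).f i)))).symm (hsingle i)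
    exact P.ext_of_isTriangulatedClosed₂ _ (L.map_distinguished _
      (HomotopyCategory.trianglehOfDegreewiseSplit_distinguished _
        (fun p => (K.nonempty_πSingleShortComplex_eval_splitting a hlow p).some)))
      hker (hsingle a)

lemma prop_map_quotient_obj_of_bounded (P : ObjectProperty D) [P.IsTriangulatedClosed₂]
    [P.IsClosedUnderIsomorphisms] [P.ContainsZero] (K : CochainComplex C ℤ)
    (hK : RelDer.Bounded K)
    (hsingle : ∀ i, P (L.obj ((HomotopyCategory.singleFunctor C i).obj (K.X i)))) :
    P (L.obj ((HomotopyCategory.quotient C _).obj K)) := by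
  obtain ⟨a, b, hab⟩ := hK
  exact prop_map_quotient_obj_of_isZero_outside L P (b + 1 - a).toNat K a
    (fun i hi => hab i (Or.inl hi)) (fun i hi => hab i (Or.inr (by omega))) hsingle

noncomputable def singleShiftIso (A : C) (i : ℤ) :
    (L.obj ((HomotopyCategory.singleFunctor C 0).obj A))⟦-i⟧ ≅
      L.obj ((HomotopyCategory.singleFunctor C i).obj A) :=
  (((HomotopyCategory.singleFunctors C).postcomp L).shiftIso (-i) i 0 (by omega)).app A

lemma subsingleton_map_quotient_obj_hom_shift (W : D) (X : CochainComplex C ℤ)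
    (hX : RelDer.Bounded X) (m c : ℤ) (hXm : ∀ i < m, IsZero (X.X i))
    (hvan : ∀ i k, c ≤ k →
      Subsingleton (L.obj ((HomotopyCategory.singleFunctor C 0).obj (X.X i)) ⟶ W⟦k⟧))
    (l : ℤ) (hl : c ≤ l + m) :
    Subsingleton (L.obj ((HomotopyCategory.quotient C _).obj X) ⟶ W⟦l⟧) := by
  rw [← ObjectProperty.leftOrthogonal_singleton_iff]
  refine prop_map_quotient_obj_of_bounded L _ X hX (fun i => ?_)
  by_cases hi : i < m
  · exact ObjectProperty.prop_of_isZero _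
      (L.map_isZero ((HomotopyCategory.singleFunctor C i).map_isZero (hXm i hi)))
  · refine ObjectProperty.prop_of_iso _ (singleShiftIso L _ i) ?_
    rw [ObjectProperty.leftOrthogonal_singleton_iff,
      subsingleton_shift_hom_shift_iff _ _ (-i) l (l + i) (by omega)]
    exact hvan i (l + i) (by omega)

lemma subsingleton_hom_shift_map_quotient_obj (G : D) (Y : CochainComplex C ℤ)
    (hY : RelDer.Bounded Y) (t c : ℤ) (hYt : ∀ j, t < j → IsZero (Y.X j))
    (hvan : ∀ j k, c ≤ k →
      Subsingleton (G ⟶ (L.obj ((HomotopyCategory.singleFunctor C 0).obj (Y.X j)))⟦k⟧))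
    (k : ℤ) (hk : c + t ≤ k) :
    Subsingleton (G ⟶ (L.obj ((HomotopyCategory.quotient C _).obj Y))⟦k⟧) := by
  rw [← subsingleton_shift_hom_iff G _ (-k) k (by omega),
    ← ObjectProperty.rightOrthogonal_singleton_iff]
  refine prop_map_quotient_obj_of_bounded L _ Y hY (fun j => ?_)
  by_cases hj : t < j
  · exact ObjectProperty.prop_of_isZero _
      (L.map_isZero ((HomotopyCategory.singleFunctor C j).map_isZero (hYt j hj)))
  · refine ObjectProperty.prop_of_iso _ (singleShiftIso L _ j) ?_
    rw [ObjectProperty.rightOrthogonal_singleton_iff,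
      subsingleton_shift_hom_shift_iff _ _ (-k) (-j) (k - j) (by omega)]
    exact hvan j (k - j) (by omega)

end Devissage

namespace RelDer

universe u₁ v₁

/-- If `X^i = 0` for `i < m`, `Y^j = 0` for `j > t` and `Ext^l_F(X^i, Y^j) = 0` for
`l ≥ d`, then `Hom_{D_F}(X^•, Y^•[l]) = 0` for `l ≥ d + t - m`. -/
theorem statement16 {Λ : Type u} [Ring Λ] (F : ShortComplex (ModuleCat.{u} Λ) → Prop)
    (hSE : ∀ S, F S → S.ShortExact) (hEnough : HasEnoughFProjectives F)
    (N : Triangulated.Subcategory (HomotopyCategory (ModuleCat.{u} Λ) (ComplexShape.up ℤ)))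
    (hN : ∀ Z : CochainComplex (ModuleCat.{u} Λ) ℤ,
      N.P ((HomotopyCategory.quotient _ _).obj Z) ↔ FAcyclic F Z)
    {DF : Type u₁} [Category.{v₁} DF] [HasZeroObject DF] [HasShift DF ℤ]
    [Preadditive DF] [∀ n : ℤ, (shiftFunctor DF n).Additive] [Pretriangulated DF]
    (L : HomotopyCategory (ModuleCat.{u} Λ) (ComplexShape.up ℤ) ⥤ DF)
    [L.IsLocalization N.W] [L.CommShift ℤ] [L.IsTriangulated]
    (m t d : ℕ) (X Y : CochainComplex (ModuleCat.{u} Λ) ℤ)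
    (hXb : Bounded X) (hYb : Bounded Y)
    (hX : ∀ i : ℤ, i < (m : ℤ) → IsZero (X.X i))
    (hY : ∀ j : ℤ, (t : ℤ) < j → IsZero (Y.X j))
    (hvan : ∀ (i j : ℤ) (l : ℕ), d ≤ l →
      ∀ h : L.obj ((HomotopyCategory.quotient _ _).obj
          ((CochainComplex.singleFunctor (ModuleCat.{u} Λ) 0).obj (X.X i))) ⟶
        (L.obj ((HomotopyCategory.quotient _ _).obj
          ((CochainComplex.singleFunctor (ModuleCat.{u} Λ) 0).obj (Y.X j))))⟦(l : ℤ)⟧,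
        h = 0) :
    ∀ l : ℤ, (d : ℤ) + (t : ℤ) - (m : ℤ) ≤ l →
      ∀ h : L.obj ((HomotopyCategory.quotient _ _).obj X) ⟶
          (L.obj ((HomotopyCategory.quotient _ _).obj Y))⟦l⟧,
        h = 0 := by
  have hExt : ∀ i j (k : ℤ), d ≤ k →
      Subsingleton (L.obj ((HomotopyCategory.singleFunctor _ 0).obj (X.X i)) ⟶
        (L.obj ((HomotopyCategory.singleFunctor _ 0).obj (Y.X j)))⟦k⟧) := by
    intro i j k hk
    obtain ⟨n, rfl⟩ : ∃ n : ℕ, k = n := ⟨k.toNat, by omega⟩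
    exact subsingleton_of_forall_eq 0 (hvan i j n (by omega))
  intro l hl
  refine (subsingleton_iff_forall_eq 0).1 ?_
  refine subsingleton_map_quotient_obj_hom_shift L _ X hXb m (d + t) hX
    (fun i k hk => ?_) l (by omega)
  exact subsingleton_hom_shift_map_quotient_obj L _ Y hYb t d hY (hExt i) k hk

end RelDer
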